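/- arXiv:1709.06432 — 2 statements merged into one kernel-verified Lean document; each statement's English description precedes it below -/
import Mathlib

section
/- Let L(X) = Σ_{k≥w} a_k X^{-k} be a formal Laurent series over F_p with continued fraction convergents P_h/Q_h and d_h := deg(Q_h). Let m be a positive integer and H an index with d_H ≤ m < d_{H+1}. Then the d_H × m matrix over F_p whose (i,j) entry is a_{i+j-1} (the Hankel matrix with rows (a_i, a_{i+1}, ..., a_{i+m-1}) for i = 1, ..., d_H) has full row rank d_H. -/
open scoped Classical ENNReal
open Polynomial

noncomputable section

namespace KH

/-- The field `F_p((X⁻¹))` of formal Laurent series in `X⁻¹` over `ZMod p`,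
modeled as Hahn series over `ℤ`: the coefficient at `i : ℤ` is the coefficient of `X^{-i}`. -/
abbrev LS (p : ℕ) := HahnSeries ℤ (ZMod p)

/-- The element `X` of `F_p((X⁻¹))` (exponent `-1` in `X⁻¹`). -/
def Xls (p : ℕ) : LS p := HahnSeries.single (-1 : ℤ) 1

/-- `ν(L) = -w` where `w` is the order of `L` (`ν(0) = 0` by convention). -/
def nu {p : ℕ} (L : LS p) : ℤ := -(HahnSeries.order L)

/-- Embedding of polynomials `F_p[X] → F_p((X⁻¹))`, sending `X` to `Xls`. -/
def P2L (p : ℕ) [Fact p.Prime] : Polynomial (ZMod p) →+* LS p :=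
  (Polynomial.aeval (Xls p)).toRingHom

/-- The fractional part `{L} = ∑_{i ≥ 1} a_i X^{-i}`. -/
def frac {p : ℕ} (L : LS p) : LS p where
  coeff i := if 1 ≤ i then L.coeff i else 0
  isPWO_support' := L.isPWO_support'.mono (by
    intro i hi
    by_cases h : (1:ℤ) ≤ i <;> simp [HahnSeries.support, h] at hi ⊢ <;> tauto)

/-- Continued fraction remainders: `cfRem L 0 = L`, `cfRem L (n+1) = 1/{cfRem L n}`. -/
def cfRem {p : ℕ} [Fact p.Prime] (L : LS p) : ℕ → LS p
  | 0 => L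
  | n + 1 => (frac (cfRem L n))⁻¹

/-- The `n`-th continued fraction partial quotient of `L` (as a Laurent series; it is the
polynomial part of the `n`-th remainder). -/
def cfA {p : ℕ} [Fact p.Prime] (L : LS p) (n : ℕ) : LS p :=
  cfRem L n - frac (cfRem L n)

/-- The degree of the `n`-th partial quotient. -/
def degA {p : ℕ} [Fact p.Prime] (L : LS p) (n : ℕ) : ℤ := nu (cfA L n)

/-- Denominators `Q_h` of the convergents of `L`. -/
def cfQ {p : ℕ} [Fact p.Prime] (L : LS p) : ℕ → LS p
  | 0 => 1
  | 1 => cfA L 1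
  | n + 2 => cfA L (n + 2) * cfQ L (n + 1) + cfQ L n

/-- Numerators `P_h` of the convergents of `L`. -/
def cfP {p : ℕ} [Fact p.Prime] (L : LS p) : ℕ → LS p
  | 0 => cfA L 0
  | 1 => cfA L 1 * cfA L 0 + 1
  | n + 2 => cfA L (n + 2) * cfP L (n + 1) + cfP L n

/-- `d_h = deg Q_h`. -/
def dQ {p : ℕ} [Fact p.Prime] (L : LS p) (h : ℕ) : ℤ := nu (cfQ L h)

/-- Evaluation at `X = p` of (the fractional part of) a Laurent series:
`∑_{i ≥ 1} a_i p^{-i}` with digits `a_i ∈ {0, …, p-1}`. -/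
def evalAtP {p : ℕ} (L : LS p) : ℝ :=
  ∑' i : ℕ, ((L.coeff ((i : ℤ) + 1)).val : ℝ) / (p : ℝ) ^ (i + 1)

/-- The polynomial over `F_p` associated with `n ∈ ℕ`, whose coefficients are the
base-`p` digits of `n`. -/
def nPoly (p : ℕ) (n : ℕ) : Polynomial (ZMod p) :=
  ∑ i ∈ Finset.range (n + 1), Polynomial.C ((n / p ^ i % p : ℕ) : ZMod p) * Polynomial.X ^ i

/-- The `n`-th point of the digital Kronecker sequence associated with `L`. -/
def kron (p : ℕ) [Fact p.Prime] (L : LS p) (n : ℕ) : ℝ :=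
  evalAtP (frac (P2L p (nPoly p n) * L))

/-- The `i`-th digit of `n(X)` in base `b(X)`. -/
def haltonDigit (p : ℕ) [Fact p.Prime] (b : Polynomial (ZMod p)) (n i : ℕ) :
    Polynomial (ZMod p) :=
  (nPoly p n /ₘ b ^ i) %ₘ b

/-- Evaluation of a polynomial over `F_p` at `p` (digits in `{0,…,p-1}`). -/
def polyEvalNat (p : ℕ) (a : Polynomial (ZMod p)) : ℕ :=
  ∑ i ∈ Finset.range (a.natDegree + 1), (a.coeff i).val * p ^ i

/-- The `n`-th point of the van der Corput sequence in base `b(X)` over `F_p`. -/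
def vdc (p : ℕ) [Fact p.Prime] (b : Polynomial (ZMod p)) (n : ℕ) : ℝ :=
  ∑' i : ℕ, (polyEvalNat p (haltonDigit p b n i) : ℝ) / (p : ℝ) ^ (b.natDegree * (i + 1))

/-- Number of indices `n < N` with `z n` in the box `∏ [a i, b i)`. -/
def countIn (d : ℕ) (z : ℕ → Fin d → ℝ) (N : ℕ) (a b : Fin d → ℝ) : ℕ :=
  ((Finset.range N).filter fun n => ∀ i, a i ≤ z n i ∧ z n i < b i).card

/-- The (extreme) discrepancy of the first `N` points of `z` in `[0,1)^d`. -/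
def disc (d : ℕ) (z : ℕ → Fin d → ℝ) (N : ℕ) : ℝ :=
  sSup { r | ∃ a b : Fin d → ℝ, (∀ i, 0 ≤ a i ∧ a i ≤ b i ∧ b i ≤ 1) ∧
    r = |(countIn d z N a b : ℝ) / N - ∏ i, (b i - a i)| }

/-- The star discrepancy of the first `N` points of `z` in `[0,1)^d`. -/
def starDisc (d : ℕ) (z : ℕ → Fin d → ℝ) (N : ℕ) : ℝ :=
  sSup { r | ∃ b : Fin d → ℝ, (∀ i, 0 < b i ∧ b i ≤ 1) ∧
    r = |(countIn d z N (fun _ => 0) b : ℝ) / N - ∏ i, b i| }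

/-- The Laurent series `∑_{i ≥ 1} a_{i-1} X^{-i}` associated with a coefficient
sequence `a : ℕ → ZMod p`; this identifies `H = {L : ν(L) < 0}` with `ℕ → ZMod p`. -/
def toLS (p : ℕ) (a : ℕ → ZMod p) : LS p where
  coeff i := if h : 1 ≤ i then a (i - 1).toNat else 0
  isPWO_support' := by
    have : BddBelow {i : ℤ | (if h : 1 ≤ i then a (i - 1).toNat else 0) ≠ 0} := by
      refine ⟨1, fun i hi => ?_⟩
      by_cases h : (1:ℤ) ≤ i
      · exact h
      · simp [h] at hi
    exact (Set.isPWO_iff_isWF.mpr this.wellFoundedOn_lt)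

instance : MeasurableSpace (ZMod p) := ⊤

/-- A `(t, m, s)`-net in base `p`. -/
def IsNet (p t m s : ℕ) (P : Fin (p ^ m) → Fin s → ℝ) : Prop :=
  t ≤ m ∧ ∀ (d a : Fin s → ℕ), (∑ i, d i) = m - t → (∀ i, a i < p ^ d i) →
    (Finset.univ.filter fun n => ∀ i,
      (a i : ℝ) / (p : ℝ) ^ d i ≤ P n i ∧ P n i < ((a i : ℝ) + 1) / (p : ℝ) ^ d i).card = p ^ t

/-- A `(t, s)`-sequence in base `p`. -/
def IsTSeq (p t s : ℕ) (z : ℕ → Fin s → ℝ) : Prop :=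
  ∀ m k : ℕ, t < m → IsNet p t m s fun n => z (k * p ^ m + (n : ℕ))


/-!
Suppose `∑ cᵢ · rowᵢ = 0` and put `f = ∑ cᵢ Xⁱ`, so `deg f < d_H`. The Hankel relations say
precisely that the coefficients of `X⁻¹, …, X⁻ᵐ` in `f L` vanish, i.e. `ν({f L}) < -m ≤ -d_H`.
Let `g` be the polynomial part of `f L` and `E = Q_H L - P_H`, of valuation `-d_{H+1} ≤ -d_H`.
The polynomial `f P_H - g Q_H = {f L} Q_H - f E` then has negative valuation, hence vanishes,
and the determinant identity `P_H Q_{H-1} - P_{H-1} Q_H = ±1` turns this into `Q_H ∣ f`.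
Since `deg f < deg Q_H`, `f = 0`.
-/

open HahnSeries

/-- The image of `R[X]` in `R((X⁻¹))`: no coefficient at a negative power of `X`. -/
def polySubring (R : Type*) [Ring R] : Subring (HahnSeries ℤ R) where
  carrier := {S | ∀ i, 1 ≤ i → S.coeff i = 0}
  mul_mem' {S T} hS hT i hi := by
    rw [HahnSeries.coeff_mul]
    refine Finset.sum_eq_zero fun jk hjk => ?_
    obtain ⟨hj, -, rfl⟩ := Finset.mem_antidiagonal.mp hjk
    by_cases hj1 : 1 ≤ jk.1
    · exact absurd (hS _ hj1) hj
    · rw [hT _ (by omega), mul_zero]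
  one_mem' i hi := by rw [HahnSeries.coeff_one, if_neg (by omega)]
  add_mem' hS hT i hi := by rw [HahnSeries.coeff_add, hS i hi, hT i hi, add_zero]
  zero_mem' i _ := HahnSeries.coeff_zero
  neg_mem' hS i hi := by rw [HahnSeries.coeff_neg, hS i hi, neg_zero]

/-- The polynomial `∑ cᵢ Xⁱ`. -/
def finPoly {R : Type*} [Semiring R] {D : ℕ} (c : Fin D → R) : HahnSeries ℤ R :=
  ∑ i : Fin D, single (-((i : ℕ) : ℤ)) (c i)

section Polynomials

variable {R : Type*}

theorem eq_zero_of_mem_polySubring [Ring R] {S : HahnSeries ℤ R} (hS : S ∈ polySubring R)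
    (h : 1 ≤ S.orderTop) : S = 0 := by
  ext i
  rcases le_or_gt 1 i with hi | hi
  · exact hS i hi
  · exact coeff_eq_zero_of_lt_orderTop ((WithTop.coe_lt_coe.mpr hi).trans_le h)

theorem finPoly_mem_polySubring [Ring R] {D : ℕ} (c : Fin D → R) :
    finPoly c ∈ polySubring R :=
  sum_mem fun i _ => by
    intro j hj
    exact coeff_single_of_ne (by omega)

variable [Semiring R] {D : ℕ}

theorem coeff_finPoly_neg (c : Fin D → R) (i : Fin D) : (finPoly c).coeff (-(i : ℤ)) = c i := by
  simp [finPoly, coeff_single, Fin.val_inj]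

theorem le_orderTop_finPoly (c : Fin D → R) : ((1 - D : ℤ) : WithTop ℤ) ≤ (finPoly c).orderTop :=
  le_orderTop_iff_forall.mpr fun j hj => by
    have := WithTop.coe_lt_coe.mp hj
    rw [finPoly, HahnSeries.coeff_sum]
    exact Finset.sum_eq_zero fun i _ => coeff_single_of_ne (by omega)

theorem coeff_finPoly_mul (c : Fin D → R) (x : HahnSeries ℤ R) (k : ℤ) :
    (finPoly c * x).coeff k = ∑ i, c i * x.coeff (k + i) := by
  simp only [finPoly, Finset.sum_mul, HahnSeries.coeff_sum, coeff_single_mul, sub_neg_eq_add]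

end Polynomials

theorem coe_add_le_orderTop_mul {Γ R : Type*} [AddCommMonoid Γ] [LinearOrder Γ]
    [IsOrderedCancelAddMonoid Γ] [NonUnitalNonAssocSemiring R] {x y : HahnSeries Γ R} {a b : Γ}
    (hx : a ≤ x.orderTop) (hy : b ≤ y.orderTop) : ((a + b : Γ) : WithTop Γ) ≤ (x * y).orderTop :=
  (add_le_add hx hy).trans orderTop_add_le_mul

variable {p : ℕ}

theorem coeff_frac (S : LS p) (i : ℤ) : (frac S).coeff i = if 1 ≤ i then S.coeff i else 0 := rfl

theorem sub_frac_mem_polySubring (S : LS p) : S - frac S ∈ polySubring (ZMod p) := fun i hi => by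
  rw [HahnSeries.coeff_sub, coeff_frac, if_pos hi, sub_self]

theorem one_le_orderTop_frac (S : LS p) : 1 ≤ (frac S).orderTop :=
  le_orderTop_iff_forall.mpr fun j hj => by
    rw [coeff_frac, if_neg (by exact_mod_cast hj.not_ge)]

theorem le_orderTop_frac_finPoly_mul {D m : ℕ} {c : Fin D → ZMod p} {L : LS p}
    (hc : ∑ i, c i • (fun j : Fin m => L.coeff ((i : ℤ) + 1 + (j : ℤ))) = 0) :
    ((m + 1 : ℤ) : WithTop ℤ) ≤ (frac (finPoly c * L)).orderTop := by
  refine le_orderTop_iff_forall.mpr fun k hk => ?_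
  have hk := WithTop.coe_lt_coe.mp hk
  rw [coeff_frac]
  split_ifs with hk1
  · refine (coeff_finPoly_mul c L k).trans (Eq.trans ?_ (congrFun hc ⟨(k - 1).toNat, by omega⟩))
    simp only [Finset.sum_apply, Pi.smul_apply, smul_eq_mul]
    refine Finset.sum_congr rfl fun i _ => ?_
    congr 2
    omega
  · rfl

section ContinuedFraction

variable [Fact p.Prime] {L : LS p}

open Finset

theorem dQ_zero (L : LS p) : dQ L 0 = 0 := by
  simp [dQ, nu, cfQ]

theorem orderTop_cfA (hinf : ∀ h : ℕ, 1 ≤ h → 1 ≤ degA L h) {h : ℕ} (hh : 1 ≤ h) :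
    (cfA L h).orderTop = ((-degA L h : ℤ) : WithTop ℤ) := by
  have hA : cfA L h ≠ 0 := by
    intro h0
    have := hinf h hh
    rw [degA, h0, nu, order_zero] at this
    omega
  rw [← order_eq_orderTop_of_ne_zero hA, degA, nu, neg_neg]

theorem orderTop_frac_cfRem (hinf : ∀ h : ℕ, 1 ≤ h → 1 ≤ degA L h) (n : ℕ) :
    (frac (cfRem L n)).orderTop = degA L (n + 1) := by
  have hA := orderTop_cfA hinf (h := n + 1) (by omega)
  have hlt : (cfA L (n + 1)).orderTop < (frac (cfRem L (n + 1))).orderTop := by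
    refine lt_of_lt_of_le ?_ (one_le_orderTop_frac _)
    rw [hA]
    exact_mod_cast (by have := hinf (n + 1) (by omega); omega)
  have hrem : (cfRem L (n + 1)).orderTop = ((-degA L (n + 1) : ℤ) : WithTop ℤ) := by
    rw [← sub_add_cancel (cfRem L (n + 1)) (frac (cfRem L (n + 1))), ← cfA,
      orderTop_add_eq_left hlt, hA]
  rw [← inv_inv (frac (cfRem L n)), ← addVal_apply, AddValuation.map_inv, addVal_apply]
  change -(cfRem L (n + 1)).orderTop = _
  rw [hrem, WithTop.LinearOrderedAddCommGroup.coe_neg, neg_neg]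

theorem frac_cfRem_ne_zero (hinf : ∀ h : ℕ, 1 ≤ h → 1 ≤ degA L h) (n : ℕ) :
    frac (cfRem L n) ≠ 0 := by
  rw [← orderTop_ne_top, orderTop_frac_cfRem hinf n]
  exact WithTop.coe_ne_top

theorem orderTop_cfQ_eq_neg_sum (hinf : ∀ h : ℕ, 1 ≤ h → 1 ≤ degA L h) :
    ∀ h : ℕ, (cfQ L h).orderTop = ((-∑ i ∈ range h, degA L (i + 1) : ℤ) : WithTop ℤ)
  | 0 => by simp [cfQ]
  | 1 => by simpa [cfQ] using orderTop_cfA hinf le_rfl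
  | n + 2 => by
    have hAQ : (cfA L (n + 2) * cfQ L (n + 1)).orderTop
        = ((-degA L (n + 2) - ∑ i ∈ range (n + 1), degA L (i + 1) : ℤ) : WithTop ℤ) := by
      rw [orderTop_mul, orderTop_cfA hinf (by omega), orderTop_cfQ_eq_neg_sum hinf (n + 1)]
      norm_cast
    have hlt : (cfA L (n + 2) * cfQ L (n + 1)).orderTop < (cfQ L n).orderTop := by
      rw [hAQ, orderTop_cfQ_eq_neg_sum hinf n, sum_range_succ]
      have := hinf (n + 1) (by omega)
      have := hinf (n + 2) (by omega)
      exact_mod_cast (by omega)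
    rw [cfQ, orderTop_add_eq_left hlt, hAQ, sum_range_succ _ (n + 1)]
    norm_cast
    ring

theorem cfQ_ne_zero (hinf : ∀ h : ℕ, 1 ≤ h → 1 ≤ degA L h) (h : ℕ) : cfQ L h ≠ 0 := by
  rw [← orderTop_ne_top, orderTop_cfQ_eq_neg_sum hinf h]
  exact WithTop.coe_ne_top

theorem orderTop_cfQ (hinf : ∀ h : ℕ, 1 ≤ h → 1 ≤ degA L h) (h : ℕ) :
    (cfQ L h).orderTop = ((-dQ L h : ℤ) : WithTop ℤ) := by
  rw [dQ, nu, neg_neg, order_eq_orderTop_of_ne_zero (cfQ_ne_zero hinf h)]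

theorem dQ_succ (hinf : ∀ h : ℕ, 1 ≤ h → 1 ≤ degA L h) (h : ℕ) :
    dQ L (h + 1) = dQ L h + degA L (h + 1) := by
  have hsum : ∀ h, dQ L h = ∑ i ∈ range h, degA L (i + 1) := fun h =>
    neg_inj.mp (WithTop.coe_inj.mp
      ((orderTop_cfQ hinf h).symm.trans (orderTop_cfQ_eq_neg_sum hinf h)))
  rw [hsum, hsum, sum_range_succ]

theorem dQ_nonneg (hinf : ∀ h : ℕ, 1 ≤ h → 1 ≤ degA L h) : ∀ h : ℕ, 0 ≤ dQ L h
  | 0 => (dQ_zero L).ge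
  | h + 1 => by
    rw [dQ_succ hinf]
    linarith [dQ_nonneg hinf h, hinf (h + 1) (by omega)]

theorem cfQ_mem_polySubring : ∀ h : ℕ, cfQ L h ∈ polySubring (ZMod p)
  | 0 => one_mem _
  | 1 => sub_frac_mem_polySubring _
  | n + 2 => add_mem (mul_mem (sub_frac_mem_polySubring _) (cfQ_mem_polySubring (n + 1)))
      (cfQ_mem_polySubring n)

theorem cfP_mem_polySubring : ∀ h : ℕ, cfP L h ∈ polySubring (ZMod p)
  | 0 => sub_frac_mem_polySubring _
  | 1 => add_mem (mul_mem (sub_frac_mem_polySubring _) (sub_frac_mem_polySubring _)) (one_mem _)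
  | n + 2 => add_mem (mul_mem (sub_frac_mem_polySubring _) (cfP_mem_polySubring (n + 1)))
      (cfP_mem_polySubring n)

theorem cfP_succ_mul_cfQ_sub_cfP_mul_cfQ_succ (L : LS p) :
    ∀ h : ℕ, cfP L (h + 1) * cfQ L h - cfP L h * cfQ L (h + 1) = (-1) ^ h
  | 0 => by simp only [cfP, cfQ]; ring
  | n + 1 => by
    rw [cfP, cfQ, pow_succ, ← cfP_succ_mul_cfQ_sub_cfP_mul_cfQ_succ L n]
    ring

def cfErr (L : LS p) (h : ℕ) : LS p := cfQ L h * L - cfP L h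

theorem cfErr_succ (hinf : ∀ h : ℕ, 1 ≤ h → 1 ≤ degA L h) :
    ∀ n : ℕ, cfErr L (n + 1) = -frac (cfRem L (n + 1)) * cfErr L n
  | 0 => by
    have hf := frac_cfRem_ne_zero hinf 0
    simp only [cfErr, cfP, cfQ, cfA, cfRem] at hf ⊢
    field_simp
    ring
  | n + 1 => by
    have hf := frac_cfRem_ne_zero hinf (n + 1)
    have hrec : cfErr L (n + 2) = cfA L (n + 2) * cfErr L (n + 1) + cfErr L n := by
      simp only [cfErr, cfP, cfQ]
      ring
    rw [hrec, cfErr_succ hinf n,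
      show cfA L (n + 2) = (frac (cfRem L (n + 1)))⁻¹ - frac (cfRem L (n + 2)) from rfl]
    field_simp
    ring

theorem orderTop_cfErr (hinf : ∀ h : ℕ, 1 ≤ h → 1 ≤ degA L h) (h : ℕ) :
    (cfErr L h).orderTop = dQ L (h + 1) := by
  induction h with
  | zero =>
    rw [dQ_succ hinf, dQ_zero, zero_add, ← orderTop_frac_cfRem hinf 0]
    simp [cfErr, cfQ, cfP, cfA, cfRem]
  | succ n ih =>
    rw [cfErr_succ hinf, orderTop_mul, orderTop_neg, orderTop_frac_cfRem hinf, ih,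
      dQ_succ hinf (n + 1)]
    norm_cast
    ring

theorem mul_cfP_eq_mul_cfQ_of_le_orderTop (hinf : ∀ h : ℕ, 1 ≤ h → 1 ≤ degA L h) (h : ℕ)
    {F : LS p} (hF : F ∈ polySubring (ZMod p))
    (hdeg : ((1 - dQ L h : ℤ) : WithTop ℤ) ≤ F.orderTop)
    (happrox : ((dQ L h + 1 : ℤ) : WithTop ℤ) ≤ (frac (F * L)).orderTop) :
    F * cfP L h = (F * L - frac (F * L)) * cfQ L h := by
  set d := dQ L h
  have hE : (d : WithTop ℤ) ≤ (cfErr L h).orderTop := by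
    rw [orderTop_cfErr hinf, dQ_succ hinf h]
    exact_mod_cast (by have := hinf (h + 1) (by omega); omega)
  refine sub_eq_zero.mp (eq_zero_of_mem_polySubring (sub_mem (mul_mem hF (cfP_mem_polySubring _))
    (mul_mem (sub_frac_mem_polySubring _) (cfQ_mem_polySubring _))) ?_)
  have hSQ := coe_add_le_orderTop_mul happrox (orderTop_cfQ hinf h).ge
  have hFE := coe_add_le_orderTop_mul hdeg hE
  rw [show d + 1 + -d = 1 by ring] at hSQ
  rw [show 1 - d + d = 1 by ring] at hFE
  calc (1 : WithTop ℤ) ≤ min _ _ := le_min hSQ hFE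
    _ ≤ _ := min_orderTop_le_orderTop_sub
    _ = _ := by congr 1; simp only [cfErr]; ring

theorem eq_zero_of_le_orderTop_frac_mul (hinf : ∀ h : ℕ, 1 ≤ h → 1 ≤ degA L h) (n : ℕ)
    {F : LS p} (hF : F ∈ polySubring (ZMod p))
    (hdeg : ((1 - dQ L (n + 1) : ℤ) : WithTop ℤ) ≤ F.orderTop)
    (happrox : ((dQ L (n + 1) + 1 : ℤ) : WithTop ℤ) ≤ (frac (F * L)).orderTop) : F = 0 := by
  set G := F * L - frac (F * L)
  have hFP : F * cfP L (n + 1) = G * cfQ L (n + 1) :=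
    mul_cfP_eq_mul_cfQ_of_le_orderTop hinf (n + 1) hF hdeg happrox
  set s : LS p := (-1) ^ n
  set R := s * (G * cfQ L n - F * cfP L n)
  have hFR : F = cfQ L (n + 1) * R := by
    have hdet := cfP_succ_mul_cfQ_sub_cfP_mul_cfQ_succ L n
    have hsq : s ^ 2 = 1 := by rw [← pow_mul, mul_comm, pow_mul]; simp
    linear_combination (s * cfQ L n) * hFP - (s * F) * hdet - F * hsq
  have hR : R = 0 := by
    refine eq_zero_of_mem_polySubring (mul_mem (pow_mem (neg_mem (one_mem _)) _)
      (sub_mem (mul_mem (sub_frac_mem_polySubring _) (cfQ_mem_polySubring _))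
        (mul_mem hF (cfP_mem_polySubring _)))) ?_
    have hR' : R = (cfQ L (n + 1))⁻¹ * F := by
      rw [hFR, ← mul_assoc, inv_mul_cancel₀ (cfQ_ne_zero hinf _), one_mul]
    have hQinv : (dQ L (n + 1) : WithTop ℤ) ≤ ((cfQ L (n + 1))⁻¹).orderTop := by
      rw [← addVal_apply, AddValuation.map_inv, addVal_apply, orderTop_cfQ hinf,
        WithTop.LinearOrderedAddCommGroup.coe_neg, neg_neg]
    simpa [hR'] using coe_add_le_orderTop_mul hQinv hdeg
  rw [hFR, hR, mul_zero]

end ContinuedFraction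

theorem statement4_general (p : ℕ) [Fact p.Prime] (L : LS p)
    (hinf : ∀ h : ℕ, 1 ≤ h → 1 ≤ degA L h)
    (m : ℕ) (H : ℕ)
    (hlo : dQ L H ≤ (m : ℤ)) :
    LinearIndependent (ZMod p)
      (fun i : Fin (dQ L H).toNat => fun j : Fin m =>
        L.coeff ((i : ℤ) + 1 + (j : ℤ))) := by
  obtain _ | n := H
  · have : IsEmpty (Fin (dQ L 0).toNat) := by rw [dQ_zero, Int.toNat_zero]; infer_instance
    exact linearIndependent_empty_type
  rw [Fintype.linearIndependent_iff]
  intro c hc i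
  have hD : ((dQ L (n + 1)).toNat : ℤ) = dQ L (n + 1) := Int.toNat_of_nonneg (dQ_nonneg hinf _)
  have hF : finPoly c = 0 := by
    refine eq_zero_of_le_orderTop_frac_mul hinf n (finPoly_mem_polySubring c)
      (by simpa only [hD] using le_orderTop_finPoly c) ((WithTop.coe_le_coe.mpr ?_).trans
        (le_orderTop_frac_finPoly_mul hc))
    omega
  rw [← coeff_finPoly_neg c i, hF, HahnSeries.coeff_zero]

/-- For a Laurent series `L` with convergent denominators of degree
`d_h = deg Q_h` and `d_H ≤ m < d_{H+1}`, the `d_H × m` Hankel matrix with rows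
`(a_i, a_{i+1}, …, a_{i+m-1})`, `i = 1, …, d_H`, built from the coefficients `a_k` of
`X^{-k}` in `L`, has full row rank `d_H`. -/
theorem statement4 (p : ℕ) [Fact p.Prime] (L : LS p)
    (hinf : ∀ h : ℕ, 1 ≤ h → 1 ≤ degA L h)
    (m : ℕ) (hm : 1 ≤ m) (H : ℕ)
    (hlo : dQ L H ≤ (m : ℤ)) (hhi : (m : ℤ) < dQ L (H + 1)) :
    LinearIndependent (ZMod p)
      (fun i : Fin (dQ L H).toNat => fun j : Fin m =>
        L.coeff ((i : ℤ) + 1 + (j : ℤ))) :=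
  statement4_general p L hinf m H hlo

end KH
end
end

section
/- Let p be prime, b_1(X), ..., b_t(X) monic pairwise coprime nonconstant polynomials over F_p with degrees e_1, ..., e_t, (y_n) the Halton sequence in these bases and (x_n) the digital Kronecker sequence for some L ∈ F_p((X^{-1})). For an interval J = [0, γ) × Π_{j=1}^t [c_j / p^{e_j l_j}, δ_j) with δ_j ≤ (c_j+1)/p^{e_j l_j} and Σ_j e_j l_j > (log_p N)/2, the counting function and the measure satisfy max(A_N(J), N·λ(J)) ≤ √N + 1, where A_N(J) = #{n < N : (x_n, y_n) ∈ J}. -/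
/-!
Write `e_j = deg b_j`, `D = ∑ e_j l_j` and `M = ∏ b_j^{l_j}`, so `deg M = D`. The `i`-th
base-`p^{e_j}` digit of the van der Corput point `vdc_{b_j}(n)` encodes the `i`-th digit of `n(X)`
in base `b_j(X)`, so the condition `vdc_{b_j}(n) ∈ [c_j p^{-e_j l_j}, (c_j + 1) p^{-e_j l_j})`
fixes `n(X) mod b_j^{l_j}`, and by coprimality it fixes `n(X) mod M`. Two such indices with the
same quotient `n / p^D` have polynomials agreeing in every coefficient of degree `≥ D`, so their
difference is a multiple of the monic `M` of degree `< D`, hence zero. The indices `n < N` counted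
are therefore separated by `n / p^D`, which leaves at most `N / p^D + 1 ≤ √N + 1` of them,
and `N λ(J) ≤ N p^{-D} ≤ √N` because `N < p^{2D}`.
-/

open scoped Classical ENNReal
open Polynomial

noncomputable section

namespace Nat

lemma eq_of_forall_div_pow_mod_eq {b m n : ℕ} (hb : 1 < b)
    (h : ∀ i, m / b ^ i % b = n / b ^ i % b) : m = n := by
  have hmod : ∀ k, m % b ^ k = n % b ^ k := by
    intro k
    induction k with
    | zero => simp [Nat.mod_one]
    | succ k ih => rw [Nat.mod_pow_succ, Nat.mod_pow_succ, ih, h]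
  have hlt : ∀ x, x ≤ m + n → x < b ^ (m + n) := fun x hx =>
    lt_of_le_of_lt hx (Nat.lt_pow_self hb)
  calc m = m % b ^ (m + n) := (Nat.mod_eq_of_lt (hlt m (by omega))).symm
    _ = n % b ^ (m + n) := hmod _
    _ = n := Nat.mod_eq_of_lt (hlt n (by omega))

lemma sum_range_succ_mul_pow {b : ℕ} (d : ℕ → ℕ) (K : ℕ) :
    ∑ i ∈ Finset.range (K + 1), d i * b ^ i
      = d 0 + b * ∑ i ∈ Finset.range K, d (i + 1) * b ^ i := by
  rw [Finset.sum_range_succ', Finset.mul_sum, add_comm, pow_zero, mul_one]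
  exact congrArg _ (Finset.sum_congr rfl fun i _ => by ring)

lemma sum_range_mul_pow_lt {b : ℕ} {d : ℕ → ℕ} (hd : ∀ i, d i < b) (K : ℕ) :
    ∑ i ∈ Finset.range K, d i * b ^ i < b ^ K := by
  induction K generalizing d with
  | zero => simp
  | succ K ih =>
    rw [sum_range_succ_mul_pow, pow_succ']
    have h0 := hd 0
    have h1 := ih (fun i => hd (i + 1))
    nlinarith

lemma sum_range_mul_pow_div_pow_mod {b : ℕ} {d : ℕ → ℕ} (hd : ∀ i, d i < b) {k K : ℕ}
    (hk : k < K) : (∑ i ∈ Finset.range K, d i * b ^ i) / b ^ k % b = d k := by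
  have hb : 0 < b := (Nat.zero_le _).trans_lt (hd 0)
  obtain ⟨K, rfl⟩ : ∃ K', K = K' + 1 := ⟨K - 1, by omega⟩
  rw [sum_range_succ_mul_pow]
  induction k generalizing d K with
  | zero => rw [pow_zero, Nat.div_one, Nat.add_mul_mod_self_left, Nat.mod_eq_of_lt (hd 0)]
  | succ k ih =>
    obtain ⟨K, rfl⟩ : ∃ K', K = K' + 1 := ⟨K - 1, by omega⟩
    rw [pow_succ', ← Nat.div_div_eq_div_mul, Nat.add_mul_div_left _ _ hb, Nat.div_eq_of_lt (hd 0),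
      zero_add, sum_range_succ_mul_pow]
    exact ih (fun i => hd (i + 1)) K (by omega)

lemma floor_mul_pow_eq_div {x : ℝ} {m k l : ℕ} (hm : 0 < m) (hkl : k ≤ l) :
    ⌊x * (m : ℝ) ^ k⌋₊ = ⌊x * (m : ℝ) ^ l⌋₊ / m ^ (l - k) := by
  obtain ⟨d, rfl⟩ := Nat.exists_eq_add_of_le hkl
  have hx : x * (m : ℝ) ^ k = x * (m : ℝ) ^ (k + d) / ((m ^ d : ℕ) : ℝ) := by
    rw [Nat.cast_pow, pow_add, ← mul_assoc, mul_div_cancel_right₀ _ (by positivity)]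
  rw [hx, Nat.floor_div_natCast, Nat.add_sub_cancel_left]

lemma floor_mul_eq_of_mem_Ico {x q : ℝ} {c : ℕ} (hq : 0 < q) (hlo : c / q ≤ x)
    (hhi : x < (c + 1) / q) : ⌊x * q⌋₊ = c := by
  rw [div_le_iff₀ hq] at hlo
  rw [lt_div_iff₀ hq] at hhi
  exact (Nat.floor_eq_iff (le_trans (Nat.cast_nonneg c) hlo)).2 ⟨hlo, hhi⟩

end Nat

section FiniteExpansion

variable {m : ℕ} {v : ℕ → ℕ}

lemma sum_range_succ_div_pow_succ (K : ℕ) :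
    ∑ j ∈ Finset.range (K + 1), (v j : ℝ) / (m : ℝ) ^ (j + 1)
      = ((v 0 : ℝ) + ∑ j ∈ Finset.range K, (v (j + 1) : ℝ) / (m : ℝ) ^ (j + 1)) / m := by
  rw [Finset.sum_range_succ', add_comm, add_div, Finset.sum_div]
  congr 1
  · rw [zero_add, pow_one]
  · exact Finset.sum_congr rfl fun j _ => by rw [div_div, ← pow_succ]

lemma sum_range_div_pow_succ_lt_one (hv : ∀ j, v j < m) (K : ℕ) :
    ∑ j ∈ Finset.range K, (v j : ℝ) / (m : ℝ) ^ (j + 1) < 1 := by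
  induction K generalizing v with
  | zero => simp
  | succ K ih =>
    have hm : (0 : ℝ) < m := by exact_mod_cast (Nat.zero_le _).trans_lt (hv 0)
    have hv0 : (v 0 : ℝ) + 1 ≤ m := by exact_mod_cast hv 0
    rw [sum_range_succ_div_pow_succ, div_lt_one hm]
    linarith [ih (fun j => hv (j + 1))]

lemma floor_sum_range_succ_div_pow_succ_mul_pow (hm : 0 < m) (K i : ℕ) :
    ⌊(∑ j ∈ Finset.range (K + 1), (v j : ℝ) / (m : ℝ) ^ (j + 1)) * (m : ℝ) ^ (i + 1)⌋₊
      = ⌊(∑ j ∈ Finset.range K, (v (j + 1) : ℝ) / (m : ℝ) ^ (j + 1)) * (m : ℝ) ^ i⌋₊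
        + v 0 * m ^ i := by
  have hm' : (m : ℝ) ≠ 0 := by positivity
  rw [sum_range_succ_div_pow_succ, pow_succ', ← mul_assoc, div_mul_cancel₀ _ hm', add_mul,
    add_comm, ← Nat.floor_add_natCast (by positivity)]
  push_cast
  rfl

lemma floor_sum_div_pow_succ_mul_pow_mod (hv : ∀ j, v j < m) {i K : ℕ} (hi : i < K) :
    ⌊(∑ j ∈ Finset.range K, (v j : ℝ) / (m : ℝ) ^ (j + 1)) * (m : ℝ) ^ (i + 1)⌋₊ % m
      = v i := by
  have hm : 0 < m := (Nat.zero_le _).trans_lt (hv 0)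
  obtain ⟨K, rfl⟩ : ∃ K', K = K' + 1 := ⟨K - 1, by omega⟩
  rw [floor_sum_range_succ_div_pow_succ_mul_pow hm]
  induction i generalizing v K with
  | zero =>
    have hy1 := sum_range_div_pow_succ_lt_one (fun j => hv (j + 1)) K
    simp only [pow_zero, mul_one, Nat.floor_eq_zero.2 hy1, zero_add, Nat.mod_eq_of_lt (hv 0)]
  | succ i ih =>
    obtain ⟨K, rfl⟩ : ∃ K', K = K' + 1 := ⟨K - 1, by omega⟩
    rw [show v 0 * m ^ (i + 1) = v 0 * m ^ i * m by ring, Nat.add_mul_mod_self_right,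
      floor_sum_range_succ_div_pow_succ_mul_pow hm]
    exact ih (fun j => hv (j + 1)) K (by omega)

end FiniteExpansion

namespace Polynomial

variable {R : Type*} [CommRing R]

lemma pow_dvd_sub_of_digits_eq {b f g : R[X]} (hb : b.Monic) {l : ℕ}
    (h : ∀ i < l, (f /ₘ b ^ i) %ₘ b = (g /ₘ b ^ i) %ₘ b) : b ^ l ∣ f - g := by
  induction l with
  | zero => simp
  | succ l ih =>
    have hrem : f %ₘ b ^ l = g %ₘ b ^ l :=
      modByMonic_eq_of_dvd_sub (hb.pow l) (ih fun i hi => h i (by omega))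
    have hquot : b ∣ f /ₘ b ^ l - g /ₘ b ^ l :=
      (modByMonic_eq_zero_iff_dvd hb).1 (by rw [sub_modByMonic, h l (by omega), sub_self])
    have hsub : f - g = b ^ l * (f /ₘ b ^ l - g /ₘ b ^ l) := by
      conv_lhs => rw [← modByMonic_add_div f (b ^ l), ← modByMonic_add_div g (b ^ l), hrem]
      ring
    rw [hsub, pow_succ]
    exact mul_dvd_mul_left _ hquot

lemma eq_of_dvd_sub_of_coeff_eq [Nontrivial R] {M f g : R[X]} (hM : M.Monic) (hdvd : M ∣ f - g)
    (hcoeff : ∀ k, M.natDegree ≤ k → f.coeff k = g.coeff k) : f = g := by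
  by_contra hne
  refine hM.not_dvd_of_degree_lt (sub_ne_zero.2 hne) ?_ hdvd
  rw [degree_eq_natDegree hM.ne_zero, degree_lt_iff_coeff_zero]
  intro k hk
  rw [coeff_sub, hcoeff k hk, sub_self]

end Polynomial

lemma card_le_div_add_one_of_injOn {S : Finset ℕ} {N q : ℕ} (hS : ∀ n ∈ S, n < N)
    (hinj : Set.InjOn (· / q) S) : S.card ≤ N / q + 1 := by
  simpa using Finset.card_le_card_of_injOn (t := Finset.range (N / q + 1)) _
    (fun n hn => Finset.mem_range.2 (Nat.lt_succ_of_le (Nat.div_le_div_right (hS n hn).le))) hinj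

lemma div_le_sqrt_of_lt_sq {x q : ℝ} (hx : 0 ≤ x) (hq : 0 < q) (h : x < q ^ 2) :
    x / q ≤ √x := by
  have hsqrt : √x ≤ q := ((Real.sqrt_lt' hq).2 h).le
  rw [div_le_iff₀ hq]
  calc x = √x * √x := (Real.mul_self_sqrt hx).symm
    _ ≤ √x * q := by gcongr

lemma mul_prod_sub_le_prod {ι : Type*} [Fintype ι] {γ : ℝ} (hγ : γ ≤ 1) {a b w : ι → ℝ}
    (hab : ∀ i, a i ≤ b i) (hbw : ∀ i, b i ≤ a i + w i) :
    γ * ∏ i, (b i - a i) ≤ ∏ i, w i := by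
  have hnonneg : 0 ≤ ∏ i, (b i - a i) := Finset.prod_nonneg fun i _ => sub_nonneg.2 (hab i)
  calc γ * ∏ i, (b i - a i) ≤ ∏ i, (b i - a i) := mul_le_of_le_one_left hnonneg hγ
    _ ≤ ∏ i, w i := Finset.prod_le_prod (fun i _ => sub_nonneg.2 (hab i))
        fun i _ => by linarith [hbw i]

namespace KH

section HybridSequence

variable {p : ℕ} [Fact p.Prime]

lemma nPoly_coeff (n k : ℕ) : (nPoly p n).coeff k = ((n / p ^ k % p : ℕ) : ZMod p) := by
  have hp : 1 < p := (Fact.out : p.Prime).one_lt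
  rw [nPoly, finsetSum_coeff]
  simp only [coeff_C_mul_X_pow]
  rw [Finset.sum_ite_eq]
  split_ifs with hk
  · rfl
  · have hn : n < p ^ k := (Nat.lt_pow_self hp).trans_le
      (Nat.pow_le_pow_right (by omega) (by simp at hk; omega))
    rw [Nat.div_eq_of_lt hn, Nat.zero_mod, Nat.cast_zero]

lemma nPoly_injective : Function.Injective (nPoly p) := by
  intro n n' h
  have hp : 1 < p := (Fact.out : p.Prime).one_lt
  refine Nat.eq_of_forall_div_pow_mod_eq hp fun i => ?_
  have hi := congrArg (fun f => (f.coeff i).val) h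
  simp only [nPoly_coeff] at hi
  rwa [ZMod.val_natCast_of_lt (Nat.mod_lt _ (by omega)),
    ZMod.val_natCast_of_lt (Nat.mod_lt _ (by omega))] at hi

lemma nPoly_coeff_eq_of_div_eq {n n' D : ℕ} (h : n / p ^ D = n' / p ^ D) {k : ℕ} (hk : D ≤ k) :
    (nPoly p n).coeff k = (nPoly p n').coeff k := by
  have hdiv : ∀ x, x / p ^ k = x / p ^ D / p ^ (k - D) := fun x => by
    rw [Nat.div_div_eq_div_mul, ← pow_add, Nat.add_sub_cancel' hk]
  rw [nPoly_coeff, nPoly_coeff, hdiv n, hdiv n', h]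

lemma eq_of_dvd_nPoly_sub {M : (ZMod p)[X]} (hM : M.Monic) {n n' : ℕ}
    (hdvd : M ∣ nPoly p n - nPoly p n') (hdiv : n / p ^ M.natDegree = n' / p ^ M.natDegree) :
    n = n' :=
  nPoly_injective <| eq_of_dvd_sub_of_coeff_eq hM hdvd fun _ hk => nPoly_coeff_eq_of_div_eq hdiv hk

lemma polyEvalNat_eq_sum {a : (ZMod p)[X]} {K : ℕ} (hK : a.natDegree < K) :
    polyEvalNat p a = ∑ i ∈ Finset.range K, (a.coeff i).val * p ^ i := by
  refine Finset.sum_subset (Finset.range_subset_range.2 hK) fun i _ hi => ?_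
  rw [coeff_eq_zero_of_natDegree_lt (by simp at hi; omega), ZMod.val_zero, zero_mul]

lemma polyEvalNat_injective : Function.Injective (polyEvalNat p) := by
  intro a a' h
  ext k
  apply ZMod.val_injective
  set K := max (k + 1) (max a.natDegree a'.natDegree + 1)
  have hval : ∀ (f : (ZMod p)[X]) i, (f.coeff i).val < p := fun _ _ => ZMod.val_lt _
  have e := Nat.sum_range_mul_pow_div_pow_mod (hval a) (k := k) (K := K) (by omega)
  rw [← polyEvalNat_eq_sum (by omega), h, polyEvalNat_eq_sum (K := K) (by omega),
    Nat.sum_range_mul_pow_div_pow_mod (hval a') (by omega)] at e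
  exact e.symm

lemma polyEvalNat_lt_pow {a : (ZMod p)[X]} {k : ℕ} (ha : a.degree < k) :
    polyEvalNat p a < p ^ k := by
  rcases eq_or_ne a 0 with rfl | ha0
  · have := (Fact.out : p.Prime).pos
    simp only [polyEvalNat, natDegree_zero, coeff_zero, ZMod.val_zero, zero_mul,
      Finset.sum_const_zero]
    positivity
  · rw [polyEvalNat_eq_sum ((natDegree_lt_iff_degree_lt ha0).2 ha)]
    exact Nat.sum_range_mul_pow_lt (fun i => ZMod.val_lt _) k

lemma polyEvalNat_haltonDigit_lt {b : (ZMod p)[X]} (hb : b.Monic) (n i : ℕ) :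
    polyEvalNat p (haltonDigit p b n i) < p ^ b.natDegree :=
  polyEvalNat_lt_pow (degree_eq_natDegree hb.ne_zero ▸ degree_modByMonic_lt _ hb)

lemma haltonDigit_eq_zero {b : (ZMod p)[X]} (hb : b.Monic) {n i : ℕ}
    (hi : (nPoly p n).natDegree < i) : haltonDigit p b n i = 0 := by
  rcases Nat.eq_zero_or_pos b.natDegree with h0 | hpos
  · rw [haltonDigit, eq_one_of_monic_natDegree_zero hb h0, modByMonic_one]
  · rw [haltonDigit, (divByMonic_eq_zero_iff (hb.pow i)).2, zero_modByMonic]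
    rw [degree_eq_natDegree (hb.pow i).ne_zero, hb.natDegree_pow]
    exact degree_le_natDegree.trans_lt
      (by exact_mod_cast hi.trans_le (Nat.le_mul_of_pos_right i hpos))

lemma vdc_eq_sum {b : (ZMod p)[X]} (hb : b.Monic) (n : ℕ) {K : ℕ}
    (hK : (nPoly p n).natDegree < K) :
    vdc p b n = ∑ i ∈ Finset.range K,
      (polyEvalNat p (haltonDigit p b n i) : ℝ) / ((p ^ b.natDegree : ℕ) : ℝ) ^ (i + 1) := by
  rw [vdc, tsum_eq_sum]
  · refine Finset.sum_congr rfl fun i _ => by rw [Nat.cast_pow, pow_mul]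
  · intro i hi
    rw [haltonDigit_eq_zero hb (hK.trans_le (by simpa using hi))]
    simp [polyEvalNat]

lemma polyEvalNat_haltonDigit {b : (ZMod p)[X]} (hb : b.Monic) (n i : ℕ) :
    polyEvalNat p (haltonDigit p b n i)
      = ⌊vdc p b n * (p : ℝ) ^ (b.natDegree * (i + 1))⌋₊ % p ^ b.natDegree := by
  set K := max (i + 1) ((nPoly p n).natDegree + 1)
  rw [vdc_eq_sum hb n (K := K) (by omega), pow_mul, ← Nat.cast_pow,
    floor_sum_div_pow_succ_mul_pow_mod (polyEvalNat_haltonDigit_lt hb n) (by omega)]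

lemma haltonDigit_eq_of_floor_eq {b : (ZMod p)[X]} (hb : b.Monic) {n n' l : ℕ}
    (h : ⌊vdc p b n * (p : ℝ) ^ (b.natDegree * l)⌋₊ = ⌊vdc p b n' * (p : ℝ) ^ (b.natDegree * l)⌋₊)
    {i : ℕ} (hi : i < l) : haltonDigit p b n i = haltonDigit p b n' i := by
  have hp : 0 < p := (Fact.out : p.Prime).pos
  have hle : b.natDegree * (i + 1) ≤ b.natDegree * l := Nat.mul_le_mul_left _ hi
  apply polyEvalNat_injective
  rw [polyEvalNat_haltonDigit hb, polyEvalNat_haltonDigit hb, Nat.floor_mul_pow_eq_div hp hle,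
    Nat.floor_mul_pow_eq_div hp hle, h]

lemma prod_pow_dvd_nPoly_sub {ι : Type*} [Fintype ι] {b : ι → (ZMod p)[X]}
    (hmonic : ∀ j, (b j).Monic) (hcop : ∀ j j', j ≠ j' → IsCoprime (b j) (b j')) (l : ι → ℕ)
    {n n' : ℕ} (h : ∀ j, ⌊vdc p (b j) n * (p : ℝ) ^ ((b j).natDegree * l j)⌋₊
      = ⌊vdc p (b j) n' * (p : ℝ) ^ ((b j).natDegree * l j)⌋₊) :
    ∏ j, b j ^ l j ∣ nPoly p n - nPoly p n' :=
  Fintype.prod_dvd_of_coprime (fun j j' hjj' => (hcop j j' hjj').pow) fun j =>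
    pow_dvd_sub_of_digits_eq (hmonic j) fun _ hi => haltonDigit_eq_of_floor_eq (hmonic j) (h j) hi

lemma card_le_of_floor_vdc_eq {ι : Type*} [Fintype ι] {b : ι → (ZMod p)[X]}
    (hmonic : ∀ j, (b j).Monic) (hcop : ∀ j j', j ≠ j' → IsCoprime (b j) (b j')) {l c : ι → ℕ}
    {N : ℕ} {S : Finset ℕ}
    (hS : ∀ n ∈ S, n < N ∧ ∀ j, ⌊vdc p (b j) n * (p : ℝ) ^ ((b j).natDegree * l j)⌋₊ = c j) :
    S.card ≤ N / p ^ (∑ j, (b j).natDegree * l j) + 1 := by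
  have hM : (∏ j, b j ^ l j).Monic := monic_prod_of_monic _ _ fun j _ => (hmonic j).pow _
  have hMdeg : (∏ j, b j ^ l j).natDegree = ∑ j, (b j).natDegree * l j := by
    rw [natDegree_prod_of_monic _ _ fun j _ => (hmonic j).pow _]
    exact Finset.sum_congr rfl fun j _ => by rw [(hmonic j).natDegree_pow, mul_comm]
  refine card_le_div_add_one_of_injOn (fun n hn => (hS n hn).1) fun n hn n' hn' hdiv =>
    eq_of_dvd_nPoly_sub hM (prod_pow_dvd_nPoly_sub hmonic hcop l fun j => ?_) (hMdeg ▸ hdiv)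
  rw [(hS n hn).2 j, (hS n' hn').2 j]

end HybridSequence

theorem statement15_general (p : ℕ) [Fact p.Prime] (t : ℕ)
    (b : Fin t → Polynomial (ZMod p))
    (hmonic : ∀ j, (b j).Monic)
    (hcop : ∀ j j', j ≠ j' → IsCoprime (b j) (b j'))
    (L : LS p) (N : ℕ)
    (γ : ℝ) (hγ1 : γ ≤ 1)
    (l : Fin t → ℕ) (c : Fin t → ℕ)
    (δ : Fin t → ℝ)
    (hδlo : ∀ j, (c j : ℝ) / (p : ℝ) ^ ((b j).natDegree * l j) ≤ δ j)
    (hδhi : ∀ j, δ j ≤ ((c j : ℝ) + 1) / (p : ℝ) ^ ((b j).natDegree * l j))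
    (hbig : (N : ℝ) < (p : ℝ) ^ (2 * ∑ j, (b j).natDegree * l j)) :
    (((Finset.range N).filter fun n =>
        (0 ≤ kron p L n ∧ kron p L n < γ) ∧
        ∀ j, (c j : ℝ) / (p : ℝ) ^ ((b j).natDegree * l j) ≤ vdc p (b j) n ∧
          vdc p (b j) n < δ j).card : ℝ) ≤ Real.sqrt N + 1 ∧
    (N : ℝ) * (γ * ∏ j, (δ j - (c j : ℝ) / (p : ℝ) ^ ((b j).natDegree * l j)))
      ≤ Real.sqrt N + 1 := by
  set D := ∑ j, (b j).natDegree * l j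
  have hp : (0 : ℝ) < p := Nat.cast_pos.2 (Fact.out : p.Prime).pos
  have hND : (N : ℝ) / (p : ℝ) ^ D ≤ √N :=
    div_le_sqrt_of_lt_sq (Nat.cast_nonneg N) (pow_pos hp D) (by rwa [← pow_mul, mul_comm])
  refine ⟨?_, ?_⟩
  · calc (_ : ℝ) ≤ ((N / p ^ D : ℕ) : ℝ) + 1 := by
          refine (Nat.cast_le.2 (card_le_of_floor_vdc_eq hmonic hcop (c := c) fun n hn =>
            ⟨?_, fun j => ?_⟩)).trans_eq (Nat.cast_succ _)
          · exact Finset.mem_range.1 (Finset.mem_filter.1 hn).1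
          · have hbox := (Finset.mem_filter.1 hn).2.2 j
            exact Nat.floor_mul_eq_of_mem_Ico (pow_pos hp _) hbox.1 (hbox.2.trans_le (hδhi j))
      _ ≤ (N : ℝ) / (p : ℝ) ^ D + 1 := by gcongr; exact_mod_cast Nat.cast_div_le
      _ ≤ √N + 1 := by linarith
  · have hvol := mul_prod_sub_le_prod hγ1 hδlo fun j => (hδhi j).trans_eq (add_div _ _ _)
    rw [Finset.prod_div_distrib, Finset.prod_const_one, Finset.prod_pow_eq_pow_sum] at hvol
    calc (N : ℝ) * (γ * ∏ j, (δ j - (c j : ℝ) / (p : ℝ) ^ ((b j).natDegree * l j)))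
        ≤ N * (1 / (p : ℝ) ^ D) := by gcongr
      _ ≤ √N + 1 := by rw [mul_one_div]; linarith

/-- For an interval `J = [0,γ) × ∏_j [c_j/p^{e_j l_j}, δ_j)` with
`δ_j ≤ (c_j+1)/p^{e_j l_j}` and `∑_j e_j l_j > log_p(N)/2` (i.e. `N < p^{2∑ e_j l_j}`),
the hybrid Kronecker–Halton sequence satisfies `max(A_N(J), N·λ(J)) ≤ √N + 1`. -/
theorem statement15 (p : ℕ) [Fact p.Prime] (t : ℕ)
    (b : Fin t → Polynomial (ZMod p))
    (hmonic : ∀ j, (b j).Monic) (hnc : ∀ j, 1 ≤ (b j).natDegree)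
    (hcop : ∀ j j', j ≠ j' → IsCoprime (b j) (b j'))
    (L : LS p) (N : ℕ) (hN : 1 ≤ N)
    (γ : ℝ) (hγ0 : 0 < γ) (hγ1 : γ ≤ 1)
    (l : Fin t → ℕ) (c : Fin t → ℕ)
    (hc : ∀ j, c j < p ^ ((b j).natDegree * l j))
    (δ : Fin t → ℝ)
    (hδlo : ∀ j, (c j : ℝ) / (p : ℝ) ^ ((b j).natDegree * l j) ≤ δ j)
    (hδhi : ∀ j, δ j ≤ ((c j : ℝ) + 1) / (p : ℝ) ^ ((b j).natDegree * l j))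
    (hbig : (N : ℝ) < (p : ℝ) ^ (2 * ∑ j, (b j).natDegree * l j)) :
    (((Finset.range N).filter fun n =>
        (0 ≤ kron p L n ∧ kron p L n < γ) ∧
        ∀ j, (c j : ℝ) / (p : ℝ) ^ ((b j).natDegree * l j) ≤ vdc p (b j) n ∧
          vdc p (b j) n < δ j).card : ℝ) ≤ Real.sqrt N + 1 ∧
    (N : ℝ) * (γ * ∏ j, (δ j - (c j : ℝ) / (p : ℝ) ^ ((b j).natDegree * l j)))
      ≤ Real.sqrt N + 1 :=
  statement15_general p t b hmonic hcop L N γ hγ1 l c δ hδlo hδhi hbig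

end KH
end
end
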